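/- arXiv:1506.00216 — 3 statements merged into one kernel-verified Lean document; each statement's English description precedes it below -/
import Mathlib

section
/- Let N ≥ 2, z ∈ ℂ, a, b ∈ ℝ, and α, β ∈ ℂ^{N−1}. Then the Hamiltonian H = H^{(N+1)}(z,a,b,α,β) is parity-pseudo-Hermitian: Hᴴ · P^{(N+1)} = P^{(N+1)} · H, where Hᴴ denotes the conjugate transpose of H. -/
open Matrix

/-- The `(n)×(n)` discrete Laplacian-type tridiagonal matrix with `2` on the
diagonal and `-1` on the sub/super-diagonals, over `ℂ`. -/
def Tmat (n : ℕ) : Matrix (Fin n) (Fin n) ℂ := fun i j =>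
  if (i : ℕ) = (j : ℕ) then 2
  else if (i : ℕ) + 1 = (j : ℕ) ∨ (j : ℕ) + 1 = (i : ℕ) then -1
  else 0

/-- The nonlocal boundary interaction matrix `V` of the paper, Eq. (VeKa8)/(HaKa7). -/
def Vmat (N : ℕ) (z : ℂ) (a b : ℝ) (α β : ℕ → ℂ) :
    Matrix (Fin (N + 1)) (Fin (N + 1)) ℂ := fun i j =>
  if (i : ℕ) = 0 ∧ (j : ℕ) = 0 then -z
  else if (i : ℕ) = N ∧ (j : ℕ) = N then -(starRingEnd ℂ) z
  else if (i : ℕ) = 0 ∧ (j : ℕ) = N then (b : ℂ)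
  else if (i : ℕ) = N ∧ (j : ℕ) = 0 then (a : ℂ)
  else if (i : ℕ) = 0 then (starRingEnd ℂ) (β (N - (j : ℕ)))
  else if (j : ℕ) = 0 then α (i : ℕ)
  else if (j : ℕ) = N then β (i : ℕ)
  else if (i : ℕ) = N then (starRingEnd ℂ) (α (N - (j : ℕ)))
  else 0

/-- The Hamiltonian `H^{(N+1)}(z,a,b,α,β) = T + V`. -/
def Hmat (N : ℕ) (z : ℂ) (a b : ℝ) (α β : ℕ → ℂ) :
    Matrix (Fin (N + 1)) (Fin (N + 1)) ℂ :=
  Tmat (N + 1) + Vmat N z a b α β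

/-- The exchange (antidiagonal) parity matrix `P^{(N+1)}`. -/
def Pmat (N : ℕ) : Matrix (Fin (N + 1)) (Fin (N + 1)) ℂ := fun i j =>
  if (i : ℕ) + (j : ℕ) = N then 1 else 0

lemma Pmat_eq' (N : ℕ) (i j : Fin (N + 1)) :
    Pmat N i j = if j = i.rev then 1 else 0 := by
  unfold Pmat
  have hi := i.isLt; have hj := j.isLt
  congr 1
  simp only [eq_iff_iff, Fin.ext_iff, Fin.val_rev]
  omega

lemma Pmat_eq (N : ℕ) (i j : Fin (N + 1)) :
    Pmat N i j = if i = j.rev then 1 else 0 := by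
  unfold Pmat
  have hi := i.isLt; have hj := j.isLt
  congr 1
  simp only [eq_iff_iff, Fin.ext_iff, Fin.val_rev]
  omega

lemma star_Tmat (N : ℕ) (u v : Fin (N + 1)) :
    star (Tmat (N + 1) u v) = Tmat (N + 1) v.rev u.rev := by
  have hu := u.isLt; have hv := v.isLt
  unfold Tmat
  simp only [Fin.val_rev]
  split_ifs <;>
    first
      | (exfalso; omega)
      | norm_num

set_option maxHeartbeats 4000000 in
lemma star_Vmat (N : ℕ) (hN : 1 ≤ N) (z : ℂ) (a b : ℝ) (α β : ℕ → ℂ)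
    (u v : Fin (N + 1)) :
    star (Vmat N z a b α β u v) = Vmat N z a b α β v.rev u.rev := by
  have hu := u.isLt; have hv := v.isLt
  unfold Vmat
  simp only [Fin.val_rev]
  split_ifs <;>
    simp only [← starRingEnd_apply, map_neg, Complex.conj_conj,
      Complex.conj_ofReal, map_zero] <;>
    first
      | rfl
      | (exfalso; omega)
      | (congr 1 <;> omega)
      | (congr 2 <;> omega)

lemma star_Hmat (N : ℕ) (hN : 1 ≤ N) (z : ℂ) (a b : ℝ) (α β : ℕ → ℂ)
    (u v : Fin (N + 1)) :
    star (Hmat N z a b α β u v) = Hmat N z a b α β v.rev u.rev := by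
  simp only [Hmat, Matrix.add_apply, star_add, star_Tmat, star_Vmat N hN]

/-- the Hamiltonian is parity-pseudo-Hermitian,
`Hᴴ ⬝ P = P ⬝ H`. -/
theorem hamiltonian_parity_pseudo_hermitian
    (N : ℕ) (hN : 2 ≤ N) (z : ℂ) (a b : ℝ) (α β : ℕ → ℂ) :
    (Hmat N z a b α β)ᴴ * Pmat N = Pmat N * Hmat N z a b α β := by
  ext i j
  rw [Matrix.mul_apply, Matrix.mul_apply]
  have hL : ∑ k : Fin (N + 1), (Hmat N z a b α β)ᴴ i k * Pmat N k j
      = star (Hmat N z a b α β j.rev i) := by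
    rw [Finset.sum_eq_single j.rev]
    · rw [Matrix.conjTranspose_apply, Pmat_eq, if_pos rfl, mul_one]
    · intro k _ hk
      rw [Pmat_eq, if_neg hk, mul_zero]
    · intro h
      exact absurd (Finset.mem_univ _) h
  have hR : ∑ k : Fin (N + 1), Pmat N i k * Hmat N z a b α β k j
      = Hmat N z a b α β i.rev j := by
    rw [Finset.sum_eq_single i.rev]
    · rw [Pmat_eq', if_pos rfl, one_mul]
    · intro k _ hk
      rw [Pmat_eq', if_neg hk, zero_mul]
    · intro h
      exact absurd (Finset.mem_univ _) h
  rw [hL, hR, star_Hmat N (by omega), Fin.rev_rev]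
end

section
/- Let H be an n×n complex matrix, and suppose v_0, …, v_{n−1} ∈ ℂⁿ satisfy Hᴴ v_k = E_k v_k with E_k ∈ ℝ for each k, and let κ_0, …, κ_{n−1} be nonzero real numbers. Define Θ = Σ_{k} κ_k² · v_k v_kᴴ (the sum of the rank-one matrices κ_k² v_k (v_k)ᴴ). Then Θ is Hermitian, Θ satisfies the intertwining relation Hᴴ Θ = Θ H, and if moreover the vectors v_0, …, v_{n−1} form a basis of ℂⁿ then Θ is positive definite. -/
open Matrix ComplexOrder

/-!
Writing `V` for the matrix whose columns are the `v k`, `Θ = V * diagonal (κ²) * Vᴴ`. Each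
rank-one term intertwines on its own: `Hᴴ v = E v` with `E` real gives `vᴴ H = E vᴴ`, so
`Hᴴ (v vᴴ) = E v vᴴ = (v vᴴ) H`. Positive definiteness is that of `diagonal (κ²)`, transported
by `V`: the map `x ↦ (v k ⬝ᵥ x)ₖ` is injective since its transpose `y ↦ ∑ yₖ v k` is onto when
the `v k` span.
-/

namespace Matrix

variable {ι m n R : Type*} [Fintype ι]

theorem mulVec_injective_of_vecMul_surjective [Fintype m] [Fintype n] [CommSemiring R]
    {M : Matrix m n R} (hM : Function.Surjective M.vecMul) : Function.Injective M.mulVec := by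
  classical
  intro x y hxy
  ext i
  obtain ⟨w, hw⟩ := hM (Pi.single i 1)
  simpa [dotProduct_mulVec, hw] using congrArg (w ⬝ᵥ ·) hxy

theorem sum_smul_vecMulVec_star_eq [CommSemiring R] [StarRing R] [DecidableEq ι]
    (d : ι → R) (v : ι → n → R) :
    ∑ k, d k • vecMulVec (v k) (star (v k)) = (of v)ᵀ * diagonal d * (of v)ᵀᴴ := by
  ext i j
  rw [mul_apply]
  simp only [mul_diagonal, sum_apply, smul_apply, vecMulVec_apply, transpose_apply, of_apply,
    conjTranspose_apply, Pi.star_apply, smul_eq_mul]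
  exact Finset.sum_congr rfl fun k _ => by ring

theorem mul_vecMulVec_star_of_mulVec_eq_smul [Fintype n] [CommSemiring R] [StarRing R]
    {A : Matrix n n R} {x : n → R} {e : R} (he : IsSelfAdjoint e) (hx : A *ᵥ x = e • x) :
    A * vecMulVec x (star x) = vecMulVec x (star x) * Aᴴ := by
  rw [mul_vecMulVec, vecMulVec_mul, ← star_mulVec, hx, star_smul, he.star_eq, smul_vecMulVec,
    vecMulVec_smul]

theorem mul_sum_smul_vecMulVec_star_of_mulVec_eq_smul [Fintype n] [CommSemiring R] [StarRing R]
    {A : Matrix n n R} {v : ι → n → R} {e : ι → R} (he : ∀ k, IsSelfAdjoint (e k))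
    (hv : ∀ k, A *ᵥ v k = e k • v k) (d : ι → R) :
    A * ∑ k, d k • vecMulVec (v k) (star (v k)) =
      (∑ k, d k • vecMulVec (v k) (star (v k))) * Aᴴ := by
  simp only [Finset.mul_sum, Finset.sum_mul, mul_smul_comm, smul_mul_assoc,
    mul_vecMulVec_star_of_mulVec_eq_smul (he _) (hv _)]

variable [Fintype n] [CommRing R] [PartialOrder R] [StarRing R] [StarOrderedRing R]

theorem posSemidef_sum_smul_vecMulVec_star {d : ι → R} (hd : ∀ k, 0 ≤ d k) (v : ι → n → R) :
    (∑ k, d k • vecMulVec (v k) (star (v k))).PosSemidef := by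
  classical
  rw [sum_smul_vecMulVec_star_eq]
  exact (PosSemidef.diagonal (Pi.le_def.2 hd)).mul_mul_conjTranspose_same _

theorem posDef_sum_smul_vecMulVec_star [NoZeroDivisors R] {d : ι → R} (hd : ∀ k, 0 < d k)
    {v : ι → n → R} (hv : Submodule.span R (Set.range v) = ⊤) :
    (∑ k, d k • vecMulVec (v k) (star (v k))).PosDef := by
  classical
  have hsurj : Function.Surjective (of v).vecMul := by
    rw [← coe_vecMulLinear, ← LinearMap.range_eq_top, range_vecMulLinear]
    exact hv
  rw [sum_smul_vecMulVec_star_eq]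
  refine (PosDef.diagonal hd).mul_mul_conjTranspose_same ?_
  simpa only [vecMul_transpose] using mulVec_injective_of_vecMul_surjective hsurj

end Matrix

/-- the spectral expansion `Θ = Σ κ_k² v_k v_kᴴ` built from
eigenvectors of `Hᴴ` with real eigenvalues is Hermitian, intertwines `Hᴴ` and
`H`, and is positive definite when the `v_k` form a basis of `ℂⁿ`. -/
theorem spectral_expansion_metric
    (n : ℕ) (H : Matrix (Fin n) (Fin n) ℂ)
    (v : Fin n → (Fin n → ℂ)) (E : Fin n → ℝ) (κ : Fin n → ℝ)
    (hκ : ∀ k, κ k ≠ 0)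
    (hv : ∀ k, Hᴴ *ᵥ v k = ((E k : ℂ)) • v k)
    (Θ : Matrix (Fin n) (Fin n) ℂ)
    (hΘ : Θ = ∑ k, (((κ k) ^ 2 : ℝ) : ℂ) •
      Matrix.vecMulVec (v k) (fun j => (starRingEnd ℂ) (v k j))) :
    Θ.IsHermitian ∧ Hᴴ * Θ = Θ * H ∧
      ((LinearIndependent ℂ v ∧ Submodule.span ℂ (Set.range v) = ⊤) →
        Θ.PosDef) := by
  replace hΘ : Θ = ∑ k, (((κ k) ^ 2 : ℝ) : ℂ) • vecMulVec (v k) (star (v k)) := hΘ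
  subst hΘ
  refine ⟨?_, ?_, fun ⟨_, hspan⟩ => ?_⟩
  · exact (posSemidef_sum_smul_vecMulVec_star
      (fun k => Complex.zero_le_real.2 (sq_nonneg (κ k))) v).isHermitian
  · simpa only [conjTranspose_conjTranspose] using mul_sum_smul_vecMulVec_star_of_mulVec_eq_smul
      (fun k => Complex.conj_ofReal (E k)) hv _
  · exact posDef_sum_smul_vecMulVec_star
      (fun k => Complex.zero_lt_real.2 (pow_two_pos_of_ne_zero (hκ k))) hspan
end

section
/- Let R ∈ ℝ and set R_KEP = ((12 + 8√21)/125) · √(30 − 5√21). Then every complex root of the polynomial X⁵ − 4X³ + 3X − R is real if and only if |R| ≤ R_KEP. -/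
/-!
Write `f x = x⁵ - 4x³ + 3x`, so that `f' x = 5 (x² - a²) (x² - b²)` with
`a² = (6 - √21) / 5`, `b² = (6 + √21) / 5`, and the constant of the statement is `f a`. The function `f` is odd,
increasing on `(-∞, -b]`, `[-a, a]`, `[b, ∞)`, decreasing on `[-b, -a]`, `[a, b]`, and
`f a < f (-b)`.

If `|R| ≤ f a`, the intermediate value theorem gives four distinct real solutions of `f x = R`.
A non-real root `z` would make the real quadratic `(X - z) (X - z̄)` a factor, leaving room for
only three real roots.

If `R > f a`, then `f < R` on `[-a, b]`, so `f x = R` has at most one solution on each of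
`(-∞, -b]`, `[-b, -a]`, `[b, ∞)`. Since `f'` and `f''` have no common zero, every root has
multiplicity at most two, and only a critical point can be a double root; the only candidate is
`-b`. This leaves at most four real roots counted with multiplicity, whereas a quintic all of
whose complex roots are real has five. The case `R < -f a` follows by oddness.
-/

open Polynomial Set

theorem Finset.card_filter_le_one_of_injOn {α β : Type*} {f : α → β} {A : Set α}
    [DecidablePred (· ∈ A)] (hf : InjOn f A) {S : Finset α} {c : β}
    (hS : ∀ x ∈ S, f x = c) :
    (S.filter (· ∈ A)).card ≤ 1 :=
  Finset.card_le_one.2 fun x hx y hy => by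
    rw [Finset.mem_filter] at hx hy
    exact hf hx.2 hy.2 ((hS x hx.1).trans (hS y hy.1).symm)

namespace Polynomial

theorem card_roots_eq_natDegree_of_forall_im_eq_zero {p : ℝ[X]}
    (h : ∀ z : ℂ, aeval z p = 0 → z.im = 0) : p.roots.card = p.natDegree := by
  refine splits_iff_card_roots.mp <| (IsAlgClosed.splits _).of_splits_map (algebraMap ℝ ℂ) ?_
  intro z hz
  have him := h z <| by rw [aeval_def, ← eval_map]; exact (mem_roots'.mp hz).2
  exact ⟨z.re, Complex.ext rfl (by simp [him])⟩

theorem card_roots_add_two_le_natDegree {p : ℝ[X]} (hp : p ≠ 0) {z : ℂ}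
    (hz : aeval z p = 0) (him : z.im ≠ 0) : p.roots.card + 2 ≤ p.natDegree := by
  obtain ⟨r, rfl⟩ := p.quadratic_dvd_of_aeval_eq_zero_im_ne_zero hz him
  set q : ℝ[X] := X ^ 2 - C (2 * z.re) * X + C (‖z‖ ^ 2)
  have hq0 : q ≠ 0 := left_ne_zero_of_mul hp
  have hr0 : r ≠ 0 := right_ne_zero_of_mul hp
  have hq : q.roots = 0 := by
    refine Multiset.eq_zero_of_forall_notMem fun x hx => ?_
    have hx := (mem_roots hq0).mp hx
    simp [q, Complex.sq_norm, Complex.normSq_apply] at hx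
    nlinarith [sq_nonneg (x - z.re), mul_self_pos.mpr him]
  have hqdeg : q.natDegree = 2 := by simp only [q]; compute_degree!
  rw [roots_mul hp, hq, zero_add, natDegree_mul hq0 hr0, hqdeg, add_comm]
  exact Nat.add_le_add_left (card_roots' r) 2

section CharZero

variable {R : Type*} [CommRing R] [IsDomain R] [CharZero R] [DecidableEq R]

theorem rootMultiplicity_le_of_forall_not_isRoot_derivative {p : R[X]}
    (h : ∀ t, (derivative p).IsRoot t → ¬ (derivative (derivative p)).IsRoot t) (t : R) :
    p.rootMultiplicity t ≤ 1 + if (derivative p).IsRoot t then 1 else 0 := by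
  have hp' : derivative p ≠ 0 := fun h0 => h 0 (by simp [h0]) (by simp [h0])
  have hle := rootMultiplicity_sub_one_le_derivative_rootMultiplicity p t
  split_ifs with ht
  · have := mt (one_lt_rootMultiplicity_iff_isRoot hp').mp fun h' => h t h'.1 h'.2
    omega
  · rw [rootMultiplicity_eq_zero ht] at hle
    omega

theorem card_roots_le_card_toFinset_add_card_filter {p : R[X]}
    (h : ∀ t, (derivative p).IsRoot t → ¬ (derivative (derivative p)).IsRoot t) :
    p.roots.card ≤
      p.roots.toFinset.card + (p.roots.toFinset.filter (derivative p).IsRoot).card := by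
  calc p.roots.card = ∑ t ∈ p.roots.toFinset, p.rootMultiplicity t := by
        simp only [← count_roots, Multiset.toFinset_sum_count_eq]
    _ ≤ ∑ t ∈ p.roots.toFinset, (1 + if (derivative p).IsRoot t then 1 else 0) :=
        Finset.sum_le_sum fun t _ => rootMultiplicity_le_of_forall_not_isRoot_derivative h t
    _ = _ := by rw [Finset.sum_add_distrib, Finset.card_eq_sum_ones, Finset.sum_boole]; rfl

end CharZero

end Polynomial

namespace Quintic

noncomputable def poly : ℝ[X] := X ^ 5 - 4 * X ^ 3 + 3 * X

noncomputable def a : ℝ := √((6 - √21) / 5)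

noncomputable def b : ℝ := √((6 + √21) / 5)

@[simp]
theorem eval_poly (x : ℝ) : poly.eval x = x ^ 5 - 4 * x ^ 3 + 3 * x := by
  simp [poly]

theorem natDegree_poly_sub_C (R : ℝ) : (poly - C R).natDegree = 5 := by
  unfold poly; compute_degree!

theorem eval_neg (x : ℝ) : poly.eval (-x) = -poly.eval x := by
  simp only [eval_poly]; ring

theorem aeval_sub_C (R : ℝ) (z : ℂ) :
    aeval z (poly - C R) = z ^ 5 - 4 * z ^ 3 + 3 * z - R := by
  simp [poly, map_ofNat]

theorem eval_derivative (x : ℝ) :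
    (derivative poly).eval x = 5 * x ^ 4 - 12 * x ^ 2 + 3 := by
  simp [poly]; ring

theorem eval_derivative_derivative (x : ℝ) :
    (derivative (derivative poly)).eval x = 20 * x ^ 3 - 24 * x := by
  simp [poly]; ring

theorem sqrt21_sq : √21 ^ 2 = 21 := Real.sq_sqrt (by norm_num)

theorem sqrt21_bounds : 4.58 < √21 ∧ √21 < 4.59 := by
  constructor <;> nlinarith [sqrt21_sq, Real.sqrt_nonneg 21]

theorem a_sq : a ^ 2 = (6 - √21) / 5 := Real.sq_sqrt (by nlinarith [sqrt21_bounds])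

theorem b_sq : b ^ 2 = (6 + √21) / 5 := Real.sq_sqrt (by nlinarith [sqrt21_bounds])

theorem a_bounds : 0.531 < a ∧ a < 0.533 := by
  have : 0 ≤ a := Real.sqrt_nonneg _
  constructor <;> nlinarith [a_sq, sqrt21_bounds]

theorem b_bounds : 1.454 < b ∧ b < 1.456 := by
  have : 0 ≤ b := Real.sqrt_nonneg _
  constructor <;> nlinarith [b_sq, sqrt21_bounds]

theorem eval_derivative_eq_mul (x : ℝ) :
    (derivative poly).eval x = 5 * (x ^ 2 - a ^ 2) * (x ^ 2 - b ^ 2) := by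
  rw [eval_derivative, a_sq, b_sq]; linear_combination (1 / 5 : ℝ) * sqrt21_sq

theorem eval_a : poly.eval a = (12 + 8 * √21) * a / 25 := by
  rw [eval_poly]
  linear_combination (a ^ 3 + ((6 - √21) / 5 - 4) * a) * a_sq + (a / 25) * sqrt21_sq

theorem eval_a_eq : poly.eval a = (12 + 8 * √21) / 125 * √(30 - 5 * √21) := by
  have : √(30 - 5 * √21) = 5 * a := by
    rw [show 30 - 5 * √21 = (5 * a) ^ 2 by rw [mul_pow, a_sq]; ring]
    exact Real.sqrt_sq (by linarith [a_bounds])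
  rw [this, eval_a]; ring

theorem eval_b : poly.eval b = (12 - 8 * √21) * b / 25 := by
  rw [eval_poly]
  linear_combination (b ^ 3 + ((6 + √21) / 5 - 4) * b) * b_sq + (b / 25) * sqrt21_sq

theorem a_sq_lt_b_sq : a ^ 2 < b ^ 2 := by rw [a_sq, b_sq]; linarith [sqrt21_bounds]

theorem eval_derivative_pos {x : ℝ} (h : x ^ 2 < a ^ 2 ∨ b ^ 2 < x ^ 2) :
    0 < (derivative poly).eval x := by
  rw [eval_derivative_eq_mul]
  rcases h with h | h <;> nlinarith [a_sq_lt_b_sq]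

theorem eval_derivative_neg {x : ℝ} (h₁ : a ^ 2 < x ^ 2) (h₂ : x ^ 2 < b ^ 2) :
    (derivative poly).eval x < 0 := by
  rw [eval_derivative_eq_mul]; nlinarith

theorem strictMonoOn_Iic_neg_b : StrictMonoOn poly.eval (Iic (-b)) :=
  strictMonoOn_of_deriv_pos (convex_Iic _) poly.continuousOn fun x hx => by
    rw [interior_Iic] at hx
    rw [Polynomial.deriv]
    exact eval_derivative_pos (.inr (by nlinarith [hx.out, b_bounds]))

theorem strictAntiOn_Icc_neg_b_neg_a : StrictAntiOn poly.eval (Icc (-b) (-a)) :=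
  strictAntiOn_of_deriv_neg (convex_Icc _ _) poly.continuousOn fun x hx => by
    rw [interior_Icc] at hx
    rw [Polynomial.deriv]
    exact eval_derivative_neg (by nlinarith [hx.1, hx.2, a_bounds])
      (by nlinarith [hx.1, hx.2, a_bounds])

theorem strictMonoOn_Icc_neg_a_a : StrictMonoOn poly.eval (Icc (-a) a) :=
  strictMonoOn_of_deriv_pos (convex_Icc _ _) poly.continuousOn fun x hx => by
    rw [interior_Icc] at hx
    rw [Polynomial.deriv]
    exact eval_derivative_pos (.inl (by nlinarith [hx.1, hx.2]))

theorem strictAntiOn_Icc_a_b : StrictAntiOn poly.eval (Icc a b) :=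
  strictAntiOn_of_deriv_neg (convex_Icc _ _) poly.continuousOn fun x hx => by
    rw [interior_Icc] at hx
    rw [Polynomial.deriv]
    exact eval_derivative_neg (by nlinarith [hx.1, hx.2, a_bounds])
      (by nlinarith [hx.1, hx.2, a_bounds])

theorem strictMonoOn_Ici_b : StrictMonoOn poly.eval (Ici b) :=
  strictMonoOn_of_deriv_pos (convex_Ici _) poly.continuousOn fun x hx => by
    rw [interior_Ici] at hx
    rw [Polynomial.deriv]
    exact eval_derivative_pos (.inr (by nlinarith [hx.out, b_bounds]))

theorem eval_le_eval_a {x : ℝ} (hx : x ∈ Icc (-a) b) : poly.eval x ≤ poly.eval a := by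
  have ha := a_bounds
  rcases le_total x a with h | h
  · exact strictMonoOn_Icc_neg_a_a.monotoneOn ⟨hx.1, h⟩ ⟨by linarith, le_rfl⟩ h
  · exact strictAntiOn_Icc_a_b.antitoneOn ⟨le_rfl, by linarith [hx.2]⟩ ⟨h, hx.2⟩ h

theorem eval_a_lt_six : poly.eval a < 6 := by
  rw [eval_a]; nlinarith [sqrt21_bounds, a_bounds]

theorem eval_a_lt_eval_neg_b : poly.eval a < poly.eval (-b) := by
  rw [eval_neg, eval_a, eval_b]; nlinarith [sqrt21_bounds, a_bounds, b_bounds]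

theorem mem_roots_sub_C_iff {R x : ℝ} : x ∈ (poly - C R).roots ↔ poly.eval x = R :=
  mem_roots_sub_C <| natDegree_pos_iff_degree_pos.mp <| by
    have : poly.natDegree = 5 := by unfold poly; compute_degree!
    omega

theorem derivative_sub_C (R : ℝ) : derivative (poly - C R) = derivative poly := by
  rw [derivative_sub, derivative_C, sub_zero]

theorem not_isRoot_derivative_derivative (R t : ℝ) (ht : (derivative (poly - C R)).IsRoot t) :
    ¬ (derivative (derivative (poly - C R))).IsRoot t := by
  rw [derivative_sub_C, IsRoot, eval_derivative] at ht
  rw [derivative_sub_C, IsRoot, eval_derivative_derivative]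
  intro h
  have : t * (5 * t ^ 2 - 6) = 0 := by linear_combination h / 4
  rcases mul_eq_zero.mp this with h0 | h0
  · subst h0; norm_num at ht
  · nlinarith

theorem card_toFinset_roots_le_three {R : ℝ} (hR : poly.eval a < R) :
    (poly - C R).roots.toFinset.card ≤ 3 := by
  set S := (poly - C R).roots.toFinset
  have hS : ∀ x ∈ S, poly.eval x = R := fun x hx =>
    mem_roots_sub_C_iff.mp (Multiset.mem_toFinset.mp hx)
  have hcover : S ⊆ S.filter (· ∈ Iic (-b)) ∪ S.filter (· ∈ Icc (-b) (-a)) ∪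
      S.filter (· ∈ Ici b) := by
    intro x hx
    have hx' : x ∉ Icc (-a) b := fun h => (eval_le_eval_a h).not_gt (hS x hx ▸ hR)
    simp only [Finset.mem_union, Finset.mem_filter, mem_Iic, mem_Icc, mem_Ici, hx, true_and]
    simp only [mem_Icc, not_and_or, not_le] at hx'
    rcases le_or_gt x (-b) with h | h
    · exact .inl (.inl h)
    · rcases hx' with h' | h'
      · exact .inl (.inr ⟨h.le, h'.le⟩)
      · exact .inr h'.le
  calc S.card ≤ _ := Finset.card_le_card hcover
    _ ≤ _ := (Finset.card_union_le _ _).trans (Nat.add_le_add_right (Finset.card_union_le _ _) _)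
    _ ≤ 1 + 1 + 1 := by
      gcongr <;> apply Finset.card_filter_le_one_of_injOn _ hS
      exacts [strictMonoOn_Iic_neg_b.injOn, strictAntiOn_Icc_neg_b_neg_a.injOn,
        strictMonoOn_Ici_b.injOn]

theorem isRoot_derivative_eq_neg_b {R t : ℝ} (hR : poly.eval a < R) (ht : poly.eval t = R)
    (hcrit : (derivative poly).IsRoot t) : t = -b := by
  rw [IsRoot, eval_derivative_eq_mul] at hcrit
  have ha := a_bounds
  have hb := b_bounds
  have hnot : t ∉ Icc (-a) b := fun h => (eval_le_eval_a h).not_gt (ht ▸ hR)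
  simp only [mem_Icc, not_and_or, not_le] at hnot
  have : (t - a) * (t + a) * ((t - b) * (t + b)) = 0 := by linear_combination hcrit / 5
  rcases mul_eq_zero.mp this with h | h <;> rcases mul_eq_zero.mp h with h | h
  all_goals first | linarith | (rcases hnot with h' | h' <;> nlinarith)

theorem card_roots_le_four {R : ℝ} (hR : poly.eval a < R) : (poly - C R).roots.card ≤ 4 := by
  have hcrit : ((poly - C R).roots.toFinset.filter (derivative (poly - C R)).IsRoot).card ≤ 1 :=
    Finset.card_le_one.2 fun x hx y hy => by
      simp only [Finset.mem_filter, Multiset.mem_toFinset, mem_roots_sub_C_iff,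
        derivative_sub_C] at hx hy
      rw [isRoot_derivative_eq_neg_b hR hx.1 hx.2, isRoot_derivative_eq_neg_b hR hy.1 hy.2]
  have := card_roots_le_card_toFinset_add_card_filter (not_isRoot_derivative_derivative R)
  have := card_toFinset_roots_le_three hR
  omega

theorem four_le_card_roots {R : ℝ} (hR : |R| ≤ poly.eval a) :
    4 ≤ (poly - C R).roots.card := by
  obtain ⟨hR₁, hR₂⟩ := abs_le.mp hR
  have ha := a_bounds
  have hb := b_bounds
  have hab := eval_a_lt_eval_neg_b
  have h6 := eval_a_lt_six
  have hm2 : poly.eval (-2) = -6 := by norm_num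
  have h2 : poly.eval 2 = 6 := by norm_num
  have hna := eval_neg a
  have hnb := eval_neg b
  obtain ⟨x₁, hx₁, hfx₁⟩ : ∃ x ∈ Ioo (-2) (-b), poly.eval x = R :=
    intermediate_value_Ioo (by linarith) poly.continuousOn ⟨by linarith, by linarith⟩
  obtain ⟨x₂, hx₂, hfx₂⟩ : ∃ x ∈ Ioc (-b) (-a), poly.eval x = R :=
    intermediate_value_Ioc' (by linarith) poly.continuousOn ⟨by linarith, by linarith⟩
  obtain ⟨x₃, hx₃, hfx₃⟩ : ∃ x ∈ Ico a b, poly.eval x = R :=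
    intermediate_value_Ico' (by linarith) poly.continuousOn ⟨by linarith, by linarith⟩
  obtain ⟨x₄, hx₄, hfx₄⟩ : ∃ x ∈ Ioo b 2, poly.eval x = R :=
    intermediate_value_Ioo (by linarith) poly.continuousOn ⟨by linarith, by linarith⟩
  have hsub : ({x₁, x₂, x₃, x₄} : Finset ℝ) ⊆ (poly - C R).roots.toFinset := by
    intro x hx
    simp only [Finset.mem_insert, Finset.mem_singleton] at hx
    rw [Multiset.mem_toFinset, mem_roots_sub_C_iff]
    rcases hx with rfl | rfl | rfl | rfl <;> assumption
  have h₁₂ : x₁ < x₂ := hx₁.2.trans hx₂.1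
  have h₂₃ : x₂ < x₃ := by linarith [hx₂.2, hx₃.1]
  have h₃₄ : x₃ < x₄ := hx₃.2.trans hx₄.1
  have hcard : ({x₁, x₂, x₃, x₄} : Finset ℝ).card = 4 := by
    rw [Finset.card_insert_of_notMem, Finset.card_insert_of_notMem, Finset.card_pair] <;> grind
  calc 4 = _ := hcard.symm
    _ ≤ _ := Finset.card_le_card hsub
    _ ≤ _ := Multiset.toFinset_card_le _

theorem aeval_neg_sub_C (R : ℝ) (z : ℂ) :
    aeval (-z) (poly - C R) = -aeval z (poly - C (-R)) := by
  simp only [aeval_sub_C]; push_cast; ring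

theorem le_eval_a_of_forall_im_eq_zero {R : ℝ}
    (h : ∀ z : ℂ, aeval z (poly - C R) = 0 → z.im = 0) : R ≤ poly.eval a := by
  by_contra hR
  have := card_roots_eq_natDegree_of_forall_im_eq_zero h
  have := card_roots_le_four (not_le.mp hR)
  rw [natDegree_poly_sub_C] at *
  omega

end Quintic

/-- all complex roots of `X⁵ − 4X³ + 3X − R` are real iff
`|R| ≤ R_KEP` with `R_KEP = ((12 + 8√21)/125)·√(30 − 5√21)`. -/
theorem quintic_all_roots_real_iff (R : ℝ) :
    (∀ z : ℂ, z ^ 5 - 4 * z ^ 3 + 3 * z - (R : ℂ) = 0 → z.im = 0) ↔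
      |R| ≤ ((12 + 8 * Real.sqrt 21) / 125) * Real.sqrt (30 - 5 * Real.sqrt 21) := by
  simp only [← Quintic.aeval_sub_C, ← Quintic.eval_a_eq]
  constructor
  · intro h
    have hneg : ∀ z : ℂ, aeval z (Quintic.poly - C (-R)) = 0 → z.im = 0 := fun z hz => by
      simpa using h (-z) (by rw [Quintic.aeval_neg_sub_C, hz, neg_zero])
    exact abs_le.mpr ⟨neg_le.mp (Quintic.le_eval_a_of_forall_im_eq_zero hneg),
      Quintic.le_eval_a_of_forall_im_eq_zero h⟩
  · intro hR z hz
    by_contra him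
    have hdeg := Quintic.natDegree_poly_sub_C R
    have := card_roots_add_two_le_natDegree (ne_zero_of_natDegree_gt (n := 0) (by omega)) hz him
    have := Quintic.four_le_card_roots hR
    omega
end
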